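/- Let A(t) = (A_1(t),...,A_q(t)) be a smooth one-parameter family of n×n matrices with A(0) = A, and let σ_u(t) denote the corresponding symmetric functions. Then (d/dt) σ_u(t)|_{t=0} = Σ_α tr( (d/dt) A_α(t)|_{t=0} · T_{α♭(u)}(A) ), where T_v are the generalized Newton transformations of A. -/

import Mathlib

open MvPolynomial Matrix

/-- The generalized symmetric function `σ_u(A)`: the coefficient of `t^u` in
`det(I + t₁A₁ + ⋯ + t_qA_q)`. -/
noncomputable def gsigma {n q : ℕ} (A : Fin q → Matrix (Fin n) (Fin n) ℝ)
    (u : Fin q → ℕ) : ℝ :=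
  MvPolynomial.coeff (Finsupp.equivFunOnFinite.symm u)
    ((1 + ∑ α, (MvPolynomial.X α : MvPolynomial (Fin q) ℝ) • (A α).map MvPolynomial.C).det)

/-- Auxiliary recursion (on `|u|`) for the generalized Newton transformation. -/
noncomputable def newtonAux {n q : ℕ} (A : Fin q → Matrix (Fin n) (Fin n) ℝ) :
    ℕ → (Fin q → ℕ) → Matrix (Fin n) (Fin n) ℝ
  | 0, _ => 1
  | k + 1, u =>
      gsigma A u • (1 : Matrix (Fin n) (Fin n) ℝ) -
        ∑ α, if 1 ≤ u α then A α * newtonAux A k (Function.update u α (u α - 1)) else 0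

/-- The generalized Newton transformation `T_u`, defined by `T_0 = I` and
`T_u = σ_u I - ∑_α A_α T_{α♭(u)}`. -/
noncomputable def newton {n q : ℕ} (A : Fin q → Matrix (Fin n) (Fin n) ℝ)
    (u : Fin q → ℕ) : Matrix (Fin n) (Fin n) ℝ :=
  newtonAux A (∑ i, u i) u

/-!
Write `P(A) = 1 + ∑ t_α A_α` over `ℝ[t_1, …, t_q]`. Reading `P · adj P = det P • 1` off
coefficientwise gives exactly the recursion defining `T_u`, so `T_u` is the `t^u`-coefficient
of `adj P(A)`. On the other hand `σ_u(A)` is the `t^u`-coefficient of `det P(A)`, a multilinear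
function of the rows of `P(A)`, which depend affinely on `A`. Its derivative is therefore the
sum over `i` of the determinants of `P(A)` with row `i` replaced by row `i` of `∑ t_α A'_α`,
which by Cramer's rule is `tr((∑ t_α A'_α) · adj P(A))`; taking the `t^u`-coefficient gives the
formula.
-/

theorem MultilinearMap.continuous_of_finiteDimensional {𝕜 ι F : Type*} {E : ι → Type*}
    [NontriviallyNormedField 𝕜] [CompleteSpace 𝕜] [Fintype ι]
    [∀ i, NormedAddCommGroup (E i)] [∀ i, NormedSpace 𝕜 (E i)] [∀ i, FiniteDimensional 𝕜 (E i)]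
    [NormedAddCommGroup F] [NormedSpace 𝕜 F] (f : MultilinearMap 𝕜 E F) : Continuous f := by
  classical
  let b i := Module.finBasis 𝕜 (E i)
  have hf : ⇑f = fun v => ∑ r : ∀ i, Fin (Module.finrank 𝕜 (E i)),
      (∏ i, (b i).equivFun (v i) (r i)) • f fun i => b i (r i) := by
    funext v
    conv_lhs => rw [← funext fun i => (b i).sum_equivFun (v i)]
    simp only [f.map_sum, f.map_smul_univ]
  have hcoord : ∀ i j, Continuous fun v : ∀ i, E i => (b i).equivFun (v i) j := fun i j =>
    ((LinearMap.proj j).comp (b i).equivFun.toLinearMap).continuous_of_finiteDimensional.comp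
      (continuous_apply i)
  rw [hf]
  fun_prop

theorem Matrix.sum_det_updateRow_eq_trace_mul_adjugate {ι R : Type*} [Fintype ι] [DecidableEq ι]
    [CommRing R] (M N : Matrix ι ι R) :
    ∑ i, (M.updateRow i (N i)).det = (N * M.adjugate).trace := by
  refine Finset.sum_congr rfl fun i _ => ?_
  rw [← det_transpose, ← updateCol_transpose, ← cramer_apply, cramer_eq_adjugate_mulVec,
    ← adjugate_transpose, diag_apply, mul_apply, mulVec, dotProduct]
  simp only [transpose_apply, mul_comm]

theorem MvPolynomial.coeff_equivFunOnFinite_symm_X_mul {σ R : Type*} [Fintype σ] [DecidableEq σ]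
    [CommSemiring R] (u : σ → ℕ) (α : σ) (p : MvPolynomial σ R) :
    coeff (Finsupp.equivFunOnFinite.symm u) (X α * p) =
      if 1 ≤ u α then coeff (Finsupp.equivFunOnFinite.symm (Function.update u α (u α - 1))) p
      else 0 := by
  have hsub : Finsupp.equivFunOnFinite.symm u - Finsupp.single α 1 =
      Finsupp.equivFunOnFinite.symm (Function.update u α (u α - 1)) := by
    ext β
    rcases eq_or_ne β α with rfl | h <;> simp [Function.update, *]
  simp [coeff_X_mul', hsub, Nat.one_le_iff_ne_zero]

theorem sum_update_pred_add_one {σ : Type*} [Fintype σ] [DecidableEq σ] (u : σ → ℕ) {α : σ}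
    (hα : 1 ≤ u α) : ∑ i, Function.update u α (u α - 1) i + 1 = ∑ i, u i := by
  rw [Finset.sum_update_of_mem (Finset.mem_univ α),
    ← Finset.add_sum_erase _ u (Finset.mem_univ α), Finset.sdiff_singleton_eq_erase]
  omega

section Pencil

variable {ι σ R : Type*} [Fintype ι] [Fintype σ] [DecidableEq σ] [CommRing R]

noncomputable def pencil (A : σ → Matrix ι ι R) : Matrix ι ι (MvPolynomial σ R) :=
  ∑ α, (X α : MvPolynomial σ R) • (A α).map C

theorem map_coeff_pencil_mul (A : σ → Matrix ι ι R) (N : Matrix ι ι (MvPolynomial σ R))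
    (u : σ → ℕ) :
    (pencil A * N).map (coeff (Finsupp.equivFunOnFinite.symm u)) =
      ∑ α, if 1 ≤ u α then
        A α * N.map (coeff (Finsupp.equivFunOnFinite.symm (Function.update u α (u α - 1))))
      else 0 := by
  ext i j
  rw [map_apply, pencil, Finset.sum_mul, Matrix.sum_apply, coeff_sum, Matrix.sum_apply]
  refine Finset.sum_congr rfl fun α _ => ?_
  rw [smul_mul, Matrix.smul_apply, smul_eq_mul, coeff_equivFunOnFinite_symm_X_mul]
  split_ifs <;> simp [mul_apply, coeff_sum, coeff_C_mul]

end Pencil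

section Newton

variable {n q : ℕ}

theorem gsigma_eq_coeff_det (A : Fin q → Matrix (Fin n) (Fin n) ℝ) (u : Fin q → ℕ) :
    gsigma A u = coeff (Finsupp.equivFunOnFinite.symm u) (1 + pencil A).det :=
  rfl

theorem gsigma_zero (A : Fin q → Matrix (Fin n) (Fin n) ℝ) : gsigma A 0 = 1 := by
  have hconst : (1 + pencil A).map (constantCoeff (σ := Fin q) (R := ℝ)) = 1 := by
    ext i j
    simp [pencil, one_apply, Matrix.sum_apply, apply_ite constantCoeff]
  have hzero : Finsupp.equivFunOnFinite.symm (0 : Fin q → ℕ) = 0 := by ext; simp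
  rw [gsigma_eq_coeff_det, hzero, ← constantCoeff_eq, RingHom.map_det, RingHom.mapMatrix_apply,
    hconst, det_one]

theorem map_coeff_adjugate_add (A : Fin q → Matrix (Fin n) (Fin n) ℝ) (u : Fin q → ℕ) :
    (1 + pencil A).adjugate.map (coeff (Finsupp.equivFunOnFinite.symm u)) +
      ∑ α, (if 1 ≤ u α then A α * (1 + pencil A).adjugate.map
        (coeff (Finsupp.equivFunOnFinite.symm (Function.update u α (u α - 1)))) else 0) =
      gsigma A u • 1 := by
  have h := congrArg (Matrix.map · (coeff (Finsupp.equivFunOnFinite.symm u)))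
    (mul_adjugate (1 + pencil A))
  rw [add_mul, one_mul, Matrix.map_add _ (coeff_add _), map_coeff_pencil_mul] at h
  rw [h]
  ext i j
  simp [one_apply, apply_ite (coeff _), gsigma_eq_coeff_det]

theorem newton_eq_map_coeff_adjugate (A : Fin q → Matrix (Fin n) (Fin n) ℝ) (u : Fin q → ℕ) :
    newton A u = (1 + pencil A).adjugate.map (coeff (Finsupp.equivFunOnFinite.symm u)) := by
  suffices ∀ k u, ∑ i, u i = k →
      newtonAux A k u = (1 + pencil A).adjugate.map (coeff (Finsupp.equivFunOnFinite.symm u)) from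
    this _ u rfl
  intro k
  induction k with
  | zero =>
    intro u hu
    obtain rfl : u = 0 := funext fun i => Finset.sum_eq_zero_iff.1 hu i (Finset.mem_univ i)
    simpa [newtonAux, gsigma_zero] using (map_coeff_adjugate_add A 0).symm
  | succ k ih =>
    intro u hu
    have hrec : (∑ α, if 1 ≤ u α then A α * newtonAux A k (Function.update u α (u α - 1))
          else 0) =
        ∑ α, if 1 ≤ u α then A α * (1 + pencil A).adjugate.map
          (coeff (Finsupp.equivFunOnFinite.symm (Function.update u α (u α - 1)))) else 0 := by
      refine Finset.sum_congr rfl fun α _ => ?_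
      split_ifs with hα
      · rw [ih _ (by have := sum_update_pred_add_one u hα; omega)]
      · rfl
    rw [newtonAux, hrec, ← map_coeff_adjugate_add, add_sub_cancel_right]

theorem coeff_trace_pencil_mul_adjugate (A B : Fin q → Matrix (Fin n) (Fin n) ℝ)
    (u : Fin q → ℕ) :
    coeff (Finsupp.equivFunOnFinite.symm u) (pencil B * (1 + pencil A).adjugate).trace =
      ∑ α, if 1 ≤ u α then (B α * newton A (Function.update u α (u α - 1))).trace else 0 := by
  calc coeff (Finsupp.equivFunOnFinite.symm u) (pencil B * (1 + pencil A).adjugate).trace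
      = ((pencil B * (1 + pencil A).adjugate).map
          (coeff (Finsupp.equivFunOnFinite.symm u))).trace := by
        simp [trace, coeff_sum]
    _ = _ := by
        simp only [map_coeff_pencil_mul, trace_sum, apply_ite trace, trace_zero,
          newton_eq_map_coeff_adjugate]

end Newton

section Derivative

variable {n q : ℕ}

/-- The pair `(c, v)` encodes the row `c + ∑ t_α v_α`, so that the rows of `1 + pencil A` depend
linearly, not just affinely, on the data. -/
noncomputable def pencilRow :
    (Fin n → ℝ) × (Fin q → Fin n → ℝ) →ₗ[ℝ] Fin n → MvPolynomial (Fin q) ℝ where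
  toFun w j := C (w.1 j) + ∑ α, X α * C (w.2 α j)
  map_add' v w := by
    funext j
    simp only [Prod.fst_add, Prod.snd_add, Pi.add_apply, C_add, mul_add, Finset.sum_add_distrib]
    ring
  map_smul' c w := by
    funext j
    simp [smul_eq_C_mul, Finset.mul_sum, C_mul, mul_left_comm]

theorem of_pencilRow (c : Matrix (Fin n) (Fin n) ℝ) (A : Fin q → Matrix (Fin n) (Fin n) ℝ) :
    Matrix.of (fun i => pencilRow (c i, fun α j => A α i j)) = c.map C + pencil A := by
  ext i j
  simp [pencilRow, pencil, Matrix.sum_apply]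

noncomputable def coeffDetPencilRows (m : Fin q →₀ ℕ) :
    ContinuousMultilinearMap ℝ (fun _ : Fin n => (Fin n → ℝ) × (Fin q → Fin n → ℝ)) ℝ :=
  let f := (lcoeff ℝ m).compMultilinearMap
    (((detRowAlternating (n := Fin n) (R := MvPolynomial (Fin q) ℝ)).toMultilinearMap
      |>.restrictScalars ℝ).compLinearMap fun _ => pencilRow)
  ⟨f, f.continuous_of_finiteDimensional⟩

theorem coeffDetPencilRows_apply (m : Fin q →₀ ℕ)
    (v : Fin n → (Fin n → ℝ) × (Fin q → Fin n → ℝ)) :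
    coeffDetPencilRows m v = coeff m (Matrix.of fun i => pencilRow (v i)).det :=
  rfl

theorem hasDerivAt_gsigma (A : ℝ → Fin q → Matrix (Fin n) (Fin n) ℝ)
    (B : Fin q → Matrix (Fin n) (Fin n) ℝ) {t₀ : ℝ}
    (hA : ∀ α i j, HasDerivAt (fun t => A t α i j) (B α i j) t₀) (u : Fin q → ℕ) :
    HasDerivAt (fun t => gsigma (A t) u)
      (coeff (Finsupp.equivFunOnFinite.symm u) (pencil B * (1 + pencil (A t₀)).adjugate).trace)
      t₀ := by
  set Ψ := coeffDetPencilRows (n := n) (Finsupp.equivFunOnFinite.symm u)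
  let w : ℝ → Fin n → (Fin n → ℝ) × (Fin q → Fin n → ℝ) := fun t i =>
    ((1 : Matrix (Fin n) (Fin n) ℝ) i, fun α j => A t α i j)
  let w' : Fin n → (Fin n → ℝ) × (Fin q → Fin n → ℝ) := fun i => (0, fun α j => B α i j)
  have hw : HasDerivAt w w' t₀ := hasDerivAt_pi.2 fun i =>
    (hasDerivAt_const _ _).prodMk (hasDerivAt_pi.2 fun α => hasDerivAt_pi.2 fun j => hA α i j)
  have hrows : ∀ t, Matrix.of (fun i => pencilRow (w t i)) = 1 + pencil (A t) := fun t => by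
    rw [of_pencilRow, Matrix.map_one _ (map_zero C) (map_one C)]
  have hrow' : ∀ i, pencilRow (w' i) = pencil B i := fun i => by
    funext j
    simp [w', pencilRow, pencil, Matrix.sum_apply]
  have hΨ := (Ψ.hasFDerivAt (w t₀)).comp_hasDerivAt t₀ hw
  have hcomp : Ψ ∘ w = fun t => gsigma (A t) u := funext fun t => by
    rw [Function.comp_apply, coeffDetPencilRows_apply, hrows, gsigma_eq_coeff_det]
  rw [hcomp] at hΨ
  refine hΨ.congr_deriv ?_
  rw [ContinuousMultilinearMap.linearDeriv_apply, ← sum_det_updateRow_eq_trace_mul_adjugate,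
    coeff_sum]
  refine Finset.sum_congr rfl fun i _ => ?_
  rw [coeffDetPencilRows_apply, ← hrows, ← hrow', updateRow]
  congr 3
  ext k : 1
  rw [Function.apply_update (fun _ => pencilRow)]
  rfl

end Derivative

theorem deriv_sigma {n q : ℕ} (A : ℝ → Fin q → Matrix (Fin n) (Fin n) ℝ)
    (hA : ∀ α i j, Differentiable ℝ (fun t => A t α i j)) (u : Fin q → ℕ) :
    deriv (fun t => gsigma (A t) u) 0 =
      ∑ α, if 1 ≤ u α then
          ((Matrix.of fun i j => deriv (fun t => A t α i j) 0) *
            newton (A 0) (Function.update u α (u α - 1))).trace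
        else 0 := by
  let B : Fin q → Matrix (Fin n) (Fin n) ℝ := fun α =>
    Matrix.of fun i j => deriv (fun t => A t α i j) 0
  have hB : ∀ α i j, HasDerivAt (fun t => A t α i j) (B α i j) 0 := fun α i j =>
    (hA α i j 0).hasDerivAt
  rw [(hasDerivAt_gsigma A B hB u).deriv, coeff_trace_pencil_mul_adjugate]
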